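/- Let μ_1 > μ_2 > ... > μ_m > μ_{m+1} = 0 be reals, r_1, ..., r_m positive reals with r_i ≤ r_{i+1}, λ > 0, k ≥ 0 an integer, and δ_i reals satisfying δ_i ≥ λ(r_{i+1} + k r_i) for i < m, δ_m ≥ λ(k+1) r_m. If Σ_{i=1}^m δ_i(μ_i − μ_{i+1}) = (k+1)λ Σ_{i=1}^m r_i(μ_i − μ_{i+1}), then r_i = r_{i+1} for all i < m. -/

import Mathlib

/-!
Monotonicity of the ranks turns each bound on `δ_i` into `δ_i ≥ (k+1)λ r_i`, so the summation is
termwise `≥`, with positive weights `μ_i - μ_{i+1}`. Equality of the sums forces `δ_i = (k+1)λ r_i`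
for every `i`, and then `δ_i ≥ λ(r_{i+1} + k r_i)` gives `r_{i+1} ≤ r_i`.
-/

open Finset

theorem Finset.eq_of_le_of_sum_mul_eq {ι 𝕜 : Type*} [Field 𝕜] [LinearOrder 𝕜]
    [IsStrictOrderedRing 𝕜] {s : Finset ι} {a b w : ι → 𝕜}
    (hw : ∀ i ∈ s, 0 < w i) (hab : ∀ i ∈ s, a i ≤ b i)
    (h : ∑ i ∈ s, b i * w i = ∑ i ∈ s, a i * w i) :
    ∀ i ∈ s, a i = b i := by
  have hterm : ∀ i ∈ s, a i * w i ≤ b i * w i := fun i hi =>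
    mul_le_mul_of_nonneg_right (hab i hi) (hw i hi).le
  intro i hi
  exact mul_right_cancel₀ (hw i hi).ne' ((sum_eq_sum_iff_of_le hterm).mp h.symm i hi)

theorem xiao_lower_bound_le {m k : ℕ} {r δ : ℕ → ℝ} {lam : ℝ} (hlam : 0 ≤ lam)
    (hrmono : ∀ i, 1 ≤ i → i < m → r i ≤ r (i + 1))
    (hδ : ∀ i, 1 ≤ i → i < m → lam * (r (i + 1) + (k : ℝ) * r i) ≤ δ i)
    (hδm : lam * ((k : ℝ) + 1) * r m ≤ δ m) :
    ∀ i ∈ Icc 1 m, ((k : ℝ) + 1) * lam * r i ≤ δ i := by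
  intro i hi
  obtain ⟨h1, h2⟩ := mem_Icc.mp hi
  rcases h2.lt_or_eq with hlt | rfl
  · calc ((k : ℝ) + 1) * lam * r i = lam * (r i + k * r i) := by ring
      _ ≤ lam * (r (i + 1) + k * r i) := by gcongr; exact hrmono i h1 hlt
      _ ≤ δ i := hδ i h1 hlt
  · linarith

theorem xiao_equality_forces_semistable_general (m k : ℕ)
    (r μ δ : ℕ → ℝ) (lam : ℝ)
    (hrmono : ∀ i, 1 ≤ i → i < m → r i ≤ r (i + 1))
    (hμ : ∀ i, 1 ≤ i → i ≤ m → μ (i + 1) < μ i)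
    (hlam : 0 < lam)
    (hδ : ∀ i, 1 ≤ i → i < m → lam * (r (i + 1) + (k : ℝ) * r i) ≤ δ i)
    (hδm : lam * ((k : ℝ) + 1) * r m ≤ δ m)
    (heq : ∑ i ∈ Icc 1 m, δ i * (μ i - μ (i + 1)) =
      ((k : ℝ) + 1) * lam * ∑ i ∈ Icc 1 m, r i * (μ i - μ (i + 1))) :
    ∀ i, 1 ≤ i → i < m → r i = r (i + 1) := by
  intro i h1 hlt
  have hδ_eq : ∀ j ∈ Icc 1 m, ((k : ℝ) + 1) * lam * r j = δ j := by
    refine eq_of_le_of_sum_mul_eq (w := fun j => μ j - μ (j + 1)) (fun j hj => ?_)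
      (xiao_lower_bound_le hlam.le hrmono hδ hδm) ?_
    · obtain ⟨hj1, hjm⟩ := mem_Icc.mp hj
      exact sub_pos.mpr (hμ j hj1 hjm)
    · simp only [heq, mul_sum, mul_assoc]
  have hstep := hδ i h1 hlt
  rw [← hδ_eq i (mem_Icc.mpr ⟨h1, hlt.le⟩)] at hstep
  have hle : r (i + 1) ≤ r i := by nlinarith
  exact le_antisymm (hrmono i h1 hlt) hle

/-- Equality analysis in Theorem A(ii): if equality holds in the Xiao-type summation
`Σ δ_i(μ_i − μ_{i+1}) = (k+1)λ Σ r_i(μ_i − μ_{i+1})` with strictly decreasing slopes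
`μ_1 > ⋯ > μ_m > μ_{m+1} = 0`, positive increasing ranks `r_i`, `λ > 0`, and
`δ_i ≥ λ(r_{i+1} + k r_i)` for `i < m`, `δ_m ≥ λ(k+1) r_m`, then all ranks coincide. -/
theorem xiao_equality_forces_semistable (m k : ℕ) (hm : 1 ≤ m)
    (r μ δ : ℕ → ℝ) (lam : ℝ)
    (hr : ∀ i, 1 ≤ i → i ≤ m → 0 < r i)
    (hrmono : ∀ i, 1 ≤ i → i < m → r i ≤ r (i + 1))
    (hμ : ∀ i, 1 ≤ i → i ≤ m → μ (i + 1) < μ i)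
    (hμlast : μ (m + 1) = 0)
    (hlam : 0 < lam)
    (hδ : ∀ i, 1 ≤ i → i < m → lam * (r (i + 1) + (k : ℝ) * r i) ≤ δ i)
    (hδm : lam * ((k : ℝ) + 1) * r m ≤ δ m)
    (heq : ∑ i ∈ Icc 1 m, δ i * (μ i - μ (i + 1)) =
      ((k : ℝ) + 1) * lam * ∑ i ∈ Icc 1 m, r i * (μ i - μ (i + 1))) :
    ∀ i, 1 ≤ i → i < m → r i = r (i + 1) :=
  xiao_equality_forces_semistable_general m k r μ δ lam hrmono hμ hlam hδ hδm heq
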